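/- Let (A, B) be an exact 3-separation of a matroid M and let L be a line (rank-2 flat) with ⊓(A, L) = 2 = ⊓(B, L) and ⊓(A, B) = 2 in a matroid M″ extending M. Then for every subset Z of A: ⊓(Z, L) = ⊓(Z, B) = ⊓(Z, B ∪ L). -/

import Mathlib

/-! Since `⊓(A, L) = ⊓(B, L) = r(L)`, the line `L` lies in the closures of `A` and of `B`, so
`⊓(Z, B) = ⊓(Z, B ∪ L) ≥ ⊓(Z, L)`. Conversely, submodularity applied to `A ∪ L ⊇ Z ∪ L` and `B`
gives `r(Z ∪ B) − r(Z ∪ L) ≥ r(A ∪ B) − r(A) = r(B) − ⊓(A, B) = r(B) − r(L)`, which is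
`⊓(Z, B) ≤ ⊓(Z, L)`. Sets of infinite rank have `mRk = 0` by convention; when `A` or `B` has infinite
rank, the identities hold for that degenerate reason. -/

open Set

variable {α : Type*}

/-- The rank of a set in a matroid: the supremum of cardinalities of independent subsets. -/
noncomputable def mRk (M : Matroid α) (X : Set α) : ℕ :=
  sSup (Set.ncard '' {I | M.Indep I ∧ I ⊆ X})

/-- Local connectivity `⊓(S, T) = r(S) + r(T) − r(S ∪ T)`. -/
noncomputable def mConn (M : Matroid α) (S T : Set α) : ℤ :=
  (mRk M S : ℤ) + (mRk M T : ℤ) - (mRk M (S ∪ T) : ℤ)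

/-- A circuit: a minimal dependent set. -/
def mCircuit (M : Matroid α) (C : Set α) : Prop :=
  M.Dep C ∧ ∀ D, D ⊂ C → ¬ M.Dep D

/-- `M'` is a single-element extension of `M` by the element `p`:
`p` is a new element, the ground set grows by `p`, and deleting `p` recovers `M`. -/
def ExtBy (M' M : Matroid α) (p : α) : Prop :=
  p ∉ M.E ∧ M'.E = insert p M.E ∧ M'.restrict M.E = M

/-- `M'` is an extension of `M` by the two new elements `x` and `y`. -/
def ExtBy2 (M' M : Matroid α) (x y : α) : Prop :=
  x ∉ M.E ∧ y ∉ M.E ∧ x ≠ y ∧ M'.E = insert x (insert y M.E) ∧ M'.restrict M.E = M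

/-- `(A, B)` is an exact 3-separation of `M`: a partition of the ground set with
`r(A) + r(B) − r(M) = 2`. -/
def Exact3Sep (M : Matroid α) (A B : Set α) : Prop :=
  Disjoint A B ∧ A ∪ B = M.E ∧
    (mRk M A : ℤ) + (mRk M B : ℤ) - (mRk M M.E : ℤ) = 2

/-- An `A`-strand relative to the separation `(A, B)`: a minimal subset `S` of `A` with
`⊓(S, B) = 1`. -/
def Strand (M : Matroid α) (A B S : Set α) : Prop :=
  S ⊆ A ∧ mConn M S B = 1 ∧ ∀ S', S' ⊂ S → mConn M S' B ≠ 1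

open Matroid

section

variable {M : Matroid α} {I X Y W S T A B L Z : Set α}

lemma mRk_eq_toNat_eRk (M : Matroid α) (X : Set α) : mRk M X = (M.eRk X).toNat := by
  by_cases hX : M.IsRkFinite X
  · obtain ⟨I, hI, hIfin⟩ := hX.exists_finite_isBasis'
    have hmax : IsGreatest (Set.ncard '' {J | M.Indep J ∧ J ⊆ X}) I.ncard := by
      refine ⟨⟨I, ⟨hI.indep, hI.subset⟩, rfl⟩, ?_⟩
      rintro - ⟨J, ⟨hJ, hJX⟩, rfl⟩
      rw [ncard_def, ncard_def]
      exact ENat.toNat_le_toNat ((hJ.encard_le_eRk_of_subset hJX).trans_eq hI.encard_eq_eRk.symm)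
        hIfin.encard_lt_top.ne
    rw [mRk, hmax.csSup_eq, ncard_def, hI.encard_eq_eRk]
  · have hunbdd : ¬ BddAbove (Set.ncard '' {J | M.Indep J ∧ J ⊆ X}) := by
      rintro ⟨n, hn⟩
      obtain ⟨J, hJX, hJ, hJcard⟩ :=
        le_eRk_iff.1 (eRk_eq_top_iff.2 hX ▸ le_top (a := ((n + 1 : ℕ) : ℕ∞)))
      have hJn := hn ⟨J, ⟨hJ, hJX⟩, rfl⟩
      rw [ncard_def, hJcard, ENat.toNat_natCast] at hJn
      omega
    rw [mRk, csSup_of_not_bddAbove hunbdd, csSup_empty, eRk_eq_top_iff.2 hX, ENat.toNat_top]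
    rfl

lemma Matroid.IsRkFinite.cast_mRk (h : M.IsRkFinite X) : (mRk M X : ℕ∞) = M.eRk X := by
  rw [mRk_eq_toNat_eRk, ENat.natCast_toNat (eRk_ne_top_iff.2 h)]

lemma mRk_eq_zero_of_not_isRkFinite (h : ¬ M.IsRkFinite X) : mRk M X = 0 := by
  rw [mRk_eq_toNat_eRk, eRk_eq_top_iff.2 h, ENat.toNat_top]

lemma mRk_congr (h : M.closure X = M.closure Y) : mRk M X = mRk M Y := by
  rw [mRk_eq_toNat_eRk, mRk_eq_toNat_eRk, ← eRk_closure_eq, h, eRk_closure_eq]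

lemma Matroid.Indep.mRk_eq_ncard (hI : M.Indep I) : mRk M I = I.ncard := by
  rw [mRk_eq_toNat_eRk, hI.eRk_eq_encard, ncard_def]

lemma mRk_union_add_mRk_le_of_subset (hXY : X ⊆ Y) (hfin : M.IsRkFinite (Y ∪ W)) :
    mRk M (Y ∪ W) + mRk M X ≤ mRk M Y + mRk M (X ∪ W) := by
  have hsubmod : M.eRk (Y ∪ W) + M.eRk X ≤ M.eRk Y + M.eRk (X ∪ W) :=
    calc M.eRk (Y ∪ W) + M.eRk X ≤ M.eRk (Y ∩ (X ∪ W)) + M.eRk (Y ∪ (X ∪ W)) := by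
          rw [add_comm]
          exact add_le_add (M.eRk_mono (subset_inter hXY subset_union_left))
            (M.eRk_mono (union_subset_union_right Y subset_union_right))
      _ ≤ M.eRk Y + M.eRk (X ∪ W) := M.eRk_submod Y (X ∪ W)
  rwa [← hfin.cast_mRk, ← (hfin.subset (hXY.trans subset_union_left)).cast_mRk,
    ← (hfin.subset subset_union_left).cast_mRk,
    ← (hfin.subset (union_subset_union_left W hXY)).cast_mRk,
    ← Nat.cast_add, ← Nat.cast_add, Nat.cast_le] at hsubmod

lemma closure_eq_closure_of_subset_of_mRk_le (hXY : X ⊆ Y) (hY : M.IsRkFinite Y)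
    (h : mRk M Y ≤ mRk M X) : M.closure X = M.closure Y :=
  (hY.subset hXY).closure_eq_closure_of_subset_of_eRk_ge_eRk hXY <| by
    rw [← hY.cast_mRk, ← (hY.subset hXY).cast_mRk]
    exact_mod_cast h

lemma closure_eq_closure_union_of_mConn_eq (hX : M.IsRkFinite X) (hY : M.IsRkFinite Y)
    (h : mConn M X Y = mRk M Y) : M.closure X = M.closure (X ∪ Y) :=
  closure_eq_closure_of_subset_of_mRk_le subset_union_left (hX.union hY) <| by
    rw [mConn] at h
    omega

lemma closure_eq_closure_of_mConn_eq_of_mRk_eq (hX : M.IsRkFinite X) (hY : M.IsRkFinite Y)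
    (hXY : mRk M X = mRk M Y) (h : mConn M X Y = mRk M Y) : M.closure X = M.closure Y := by
  have hX_XY := closure_eq_closure_union_of_mConn_eq hX hY h
  rw [hX_XY, closure_eq_closure_of_subset_of_mRk_le subset_union_right (hX.union hY)
    (by rw [← mRk_congr hX_XY, hXY])]

lemma mConn_comm (M : Matroid α) (S T : Set α) : mConn M S T = mConn M T S := by
  rw [mConn, mConn, union_comm]
  ring

lemma mConn_congr_right {T' : Set α} (h : M.closure T = M.closure T') :
    mConn M S T = mConn M S T' := by
  rw [mConn, mConn, mRk_congr h, mRk_congr (closure_union_congr_right h)]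

lemma mConn_eq_mRk_of_not_isRkFinite (hT : ¬ M.IsRkFinite T) : mConn M S T = mRk M S := by
  rw [mConn, mRk_eq_zero_of_not_isRkFinite hT,
    mRk_eq_zero_of_not_isRkFinite fun h ↦ hT (h.subset subset_union_right)]
  simp

lemma mConn_eq_mRk_of_subset_of_closure_eq (hZA : Z ⊆ A)
    (hAL : M.closure A = M.closure L) : mConn M Z L = mRk M Z := by
  have hZL : M.closure (Z ∪ L) = M.closure L :=
    ((M.closure_subset_closure (union_subset_union_left L hZA)).trans
      (by rw [closure_union_congr_left hAL, union_self])).antisymm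
      (M.closure_subset_closure subset_union_right)
  rw [mConn, mRk_congr hZL]
  ring

lemma mConn_eq_mConn_of_subset_of_guts (hZA : Z ⊆ A) (hA : M.IsRkFinite A)
    (hB : M.IsRkFinite B) (hL : M.IsRkFinite L) (hAL : M.closure A = M.closure (A ∪ L))
    (hBL : M.closure B = M.closure (B ∪ L)) (hAB : mConn M A B = mRk M L) :
    mConn M Z L = mConn M Z B := by
  have hZB : M.closure (Z ∪ B) = M.closure (Z ∪ (B ∪ L)) := closure_union_congr_right hBL
  have hlower : mRk M (A ∪ B) + mRk M (Z ∪ L) ≤ mRk M A + mRk M (Z ∪ B) := by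
    have h := mRk_union_add_mRk_le_of_subset (W := B) (union_subset_union_left L hZA)
      ((hA.union hL).union hB)
    rwa [← mRk_congr hAL, ← mRk_congr (closure_union_congr_left hAL), union_right_comm,
      union_assoc, ← mRk_congr hZB] at h
  have hupper : mRk M (Z ∪ B) + mRk M L ≤ mRk M B + mRk M (Z ∪ L) := by
    have h := mRk_union_add_mRk_le_of_subset (X := L) (W := Z) subset_union_right
      ((hB.union hL).union (hA.subset hZA))
    rwa [← mRk_congr hBL, union_comm _ Z, ← mRk_congr hZB, union_comm L] at h
  unfold mConn at hAB ⊢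
  omega

end

theorem conn_guts_line_general (M : Matroid α) (A B : Set α) (x y : α) (L : Set α)
    (hxy : x ≠ y) (hI : M.Indep {x, y})
    (hL : L = M.closure {x, y})
    (hconnAB : mConn M A B = 2) (hconnAL : mConn M A L = 2) (hconnBL : mConn M B L = 2)
    (Z : Set α) (hZ : Z ⊆ A) :
    mConn M Z L = mConn M Z B ∧ mConn M Z B = mConn M Z (B ∪ L) := by
  have hLfin : M.IsRkFinite L := hL ▸ (M.isRkFinite_of_finite (toFinite _)).closure
  have hrL : mRk M L = 2 := by
    rw [hL, mRk_congr (M.closure_closure _), hI.mRk_eq_ncard, ncard_pair hxy]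
  rw [show (2 : ℤ) = mRk M L by exact_mod_cast hrL.symm] at hconnAB hconnAL hconnBL
  by_cases hB : M.IsRkFinite B
  · have hBL := closure_eq_closure_union_of_mConn_eq hB hLfin hconnBL
    refine ⟨?_, mConn_congr_right hBL⟩
    by_cases hA : M.IsRkFinite A
    · exact mConn_eq_mConn_of_subset_of_guts hZ hA hB hLfin
        (closure_eq_closure_union_of_mConn_eq hA hLfin hconnAL) hBL hconnAB
    · have hrB : mRk M B = mRk M L := by
        rw [mConn_comm, mConn_eq_mRk_of_not_isRkFinite hA] at hconnAB
        exact_mod_cast hconnAB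
      exact mConn_congr_right (closure_eq_closure_of_mConn_eq_of_mRk_eq hB hLfin hrB hconnBL).symm
  · have hrA : mRk M A = mRk M L := by
      rw [mConn_eq_mRk_of_not_isRkFinite hB] at hconnAB
      exact_mod_cast hconnAB
    have hA : M.IsRkFinite A := by
      by_contra hA
      rw [mRk_eq_zero_of_not_isRkFinite hA] at hrA
      omega
    rw [mConn_eq_mRk_of_subset_of_closure_eq hZ
        (closure_eq_closure_of_mConn_eq_of_mRk_eq hA hLfin hrA hconnAL),
      mConn_eq_mRk_of_not_isRkFinite hB,
      mConn_eq_mRk_of_not_isRkFinite fun h ↦ hB (h.subset subset_union_left)]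
    exact ⟨rfl, rfl⟩

/-- With a guts line `L` for `(A, B)`, every `Z ⊆ A` satisfies
`⊓(Z, L) = ⊓(Z, B) = ⊓(Z, B ∪ L)`. -/
theorem conn_guts_line (M : Matroid α) (A B : Set α) (x y : α) (L : Set α)
    (hAB : Disjoint A B) (hxy : x ≠ y) (hI : M.Indep {x, y})
    (hL : L = M.closure {x, y})
    (hconnAB : mConn M A B = 2) (hconnAL : mConn M A L = 2) (hconnBL : mConn M B L = 2)
    (Z : Set α) (hZ : Z ⊆ A) :
    mConn M Z L = mConn M Z B ∧ mConn M Z B = mConn M Z (B ∪ L) :=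
  conn_guts_line_general M A B x y L hxy hI hL hconnAB hconnAL hconnBL Z hZ
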